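/- arXiv:1806.00119 — 2 statements merged into one kernel-verified Lean document; each statement's English description precedes it below -/
import Mathlib

section
/- Checking whether a pair (R⁺, R⁻) is an inconsistency reason reduces to a single consistency check: (R⁺, R⁻) (with R⁺, R⁻ ⊆ D disjoint) is an IR of a normal program P wrt. D if and only if the program P' = P ∪ {x ← | x ∈ R⁺} ∪ {x ← not nx; nx ← not x | x ∈ D \ (R⁺ ∪ R⁻)} is inconsistent, where each nx is a fresh atom. -/
structure Rule (Atom : Type) where
  head : Atom
  pbody : Set Atom
  nbody : Set Atom

def satRule {Atom : Type} (I : Set Atom) (r : Rule Atom) : Prop :=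
  r.pbody ⊆ I ∧ r.nbody ∩ I = ∅ → r.head ∈ I

def isModel {Atom : Type} (I : Set Atom) (P : Set (Rule Atom)) : Prop :=
  ∀ r ∈ P, satRule I r

def reduct {Atom : Type} (P : Set (Rule Atom)) (I : Set Atom) : Set (Rule Atom) :=
  {r' | ∃ r ∈ P, r.nbody ∩ I = ∅ ∧ r' = Rule.mk r.head r.pbody ∅}

def isAnswerSet {Atom : Type} (P : Set (Rule Atom)) (I : Set Atom) : Prop :=
  isModel I (reduct P I) ∧ ∀ J, isModel J (reduct P I) → I ⊆ J

def facts {Atom : Type} (F : Set Atom) : Set (Rule Atom) :=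
  {r | ∃ a ∈ F, r = Rule.mk a ∅ ∅}

/-!
The choice rules `x ← not nn x`, `nn x ← not x` (`x ∈ G`) act as guesses. An answer set `I` of
`Q ∪ choiceRules nn G` is determined by `I₀ = I \ nn '' G`: it contains `nn x` exactly for the
`x ∈ G` outside `I₀`, and `I₀` is an answer set of `Q` with the chosen atoms `I₀ ∩ G` added as
facts. Because the atoms `nn x` occur nowhere in `Q`, adding them both to the interpretation and
to a candidate model does not affect the reduct of `Q`, which transports the model property and
minimality in both directions. Finally, the choices `T ⊆ D \ (R⁺ ∪ R⁻)` are exactly the sets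
`F = R⁺ ∪ T` allowed in the definition of an inconsistency reason.
-/

lemma Set.subset_union_iff_of_disjoint_right {α : Type*} {A B C : Set α} (h : Disjoint A C) :
    A ⊆ B ∪ C ↔ A ⊆ B :=
  ⟨fun h' => Disjoint.left_le_of_le_sup_right h' h, fun h' => h'.trans Set.subset_union_left⟩

lemma Set.exists_between_iff_exists_union {α : Type*} {D A B : Set α} {p : Set α → Prop}
    (hA : A ⊆ D) (hAB : A ∩ B = ∅) :
    (∃ F, F ⊆ D ∧ A ⊆ F ∧ B ∩ F = ∅ ∧ p F) ↔ ∃ T ⊆ D \ (A ∪ B), p (A ∪ T) := by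
  constructor
  · rintro ⟨F, hFD, hAF, hBF, hp⟩
    refine ⟨F \ A, fun x ⟨hxF, hxA⟩ => ⟨hFD hxF, ?_⟩, by rwa [Set.union_sdiff_cancel hAF]⟩
    rintro (hxA' | hxB)
    exacts [hxA hxA', Set.eq_empty_iff_forall_notMem.1 hBF x ⟨hxB, hxF⟩]
  · rintro ⟨T, hT, hp⟩
    refine ⟨A ∪ T, Set.union_subset hA (hT.trans Set.sdiff_subset), Set.subset_union_left, ?_, hp⟩
    rw [Set.inter_union_distrib_left, Set.inter_comm, hAB, Set.empty_union]
    exact Set.disjoint_iff_inter_eq_empty.1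
      ((Set.disjoint_sdiff_right.mono_right hT).mono_left Set.subset_union_right)

section AnswerSetProgramming

variable {Atom : Type}

def Rule.Avoids (r : Rule Atom) (S : Set Atom) : Prop :=
  r.head ∉ S ∧ Disjoint r.pbody S ∧ Disjoint r.nbody S

lemma Rule.Avoids.mono {r : Rule Atom} {S S' : Set Atom} (h : r.Avoids S) (hS : S' ⊆ S) :
    r.Avoids S' :=
  ⟨fun h' => h.1 (hS h'), h.2.1.mono_right hS, h.2.2.mono_right hS⟩

def choiceRules (nn : Atom → Atom) (G : Set Atom) : Set (Rule Atom) :=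
  {r | ∃ x ∈ G, r = Rule.mk x ∅ {nn x}} ∪ {r | ∃ x ∈ G, r = Rule.mk (nn x) ∅ {x}}

lemma facts_union (A B : Set Atom) : facts (A ∪ B) = facts A ∪ facts B := by
  ext r
  simp [facts, or_and_right, exists_or]

section Reduct

variable {Q Q₁ Q₂ : Set (Rule Atom)} {I J S F : Set Atom}

lemma isModel_reduct_iff :
    isModel J (reduct Q I) ↔ ∀ r ∈ Q, r.nbody ∩ I = ∅ → r.pbody ⊆ J → r.head ∈ J := by
  constructor
  · intro h r hr hn hp
    exact h ⟨r.head, r.pbody, ∅⟩ ⟨r, hr, hn, rfl⟩ ⟨hp, Set.empty_inter J⟩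
  · rintro h _ ⟨r, hr, hn, rfl⟩ ⟨hp, -⟩
    exact h r hr hn hp

lemma isModel_reduct_union_iff :
    isModel J (reduct (Q₁ ∪ Q₂) I) ↔ isModel J (reduct Q₁ I) ∧ isModel J (reduct Q₂ I) := by
  simp only [isModel_reduct_iff, Set.mem_union, or_imp, forall_and]

lemma isModel_reduct_facts_iff : isModel J (reduct (facts F) I) ↔ F ⊆ J := by
  rw [isModel_reduct_iff]
  constructor
  · intro h a ha
    exact h _ ⟨a, ha, rfl⟩ (Set.empty_inter I) (Set.empty_subset J)
  · rintro h _ ⟨a, ha, rfl⟩ - -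
    exact h ha

lemma isModel_reduct_choiceRules_iff {nn : Atom → Atom} {G : Set Atom} :
    isModel J (reduct (choiceRules nn G) I) ↔
      ∀ x ∈ G, (nn x ∉ I → x ∈ J) ∧ (x ∉ I → nn x ∈ J) := by
  rw [isModel_reduct_iff]
  constructor
  · intro h x hx
    exact ⟨fun hnx => h _ (Or.inl ⟨x, hx, rfl⟩) (Set.singleton_inter_eq_empty.2 hnx)
        (Set.empty_subset J),
      fun hx' => h _ (Or.inr ⟨x, hx, rfl⟩) (Set.singleton_inter_eq_empty.2 hx')
        (Set.empty_subset J)⟩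
  · rintro h _ (⟨x, hx, rfl⟩ | ⟨x, hx, rfl⟩) hn -
    exacts [(h x hx).1 (Set.singleton_inter_eq_empty.1 hn),
      (h x hx).2 (Set.singleton_inter_eq_empty.1 hn)]

lemma isModel_union_reduct_union_iff (h : ∀ r ∈ Q, r.Avoids S) :
    isModel (J ∪ S) (reduct Q (I ∪ S)) ↔ isModel J (reduct Q I) := by
  simp only [isModel_reduct_iff]
  refine forall₂_congr fun r hr => ?_
  obtain ⟨hhead, hp, hn⟩ := h r hr
  rw [Set.inter_union_distrib_left, hn.inter_eq, Set.union_empty, Set.mem_union,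
    or_iff_left hhead]
  exact imp_congr_right fun _ => imp_congr_left (Set.subset_union_iff_of_disjoint_right hp)

end Reduct

section AnswerSet

variable {Q : Set (Rule Atom)} {I : Set Atom}

lemma isAnswerSet.exists_rule_head_eq (h : isAnswerSet Q I) {a : Atom} (ha : a ∈ I) :
    ∃ r ∈ Q, r.head = a ∧ r.nbody ∩ I = ∅ := by
  by_contra! hunsupported
  -- otherwise `I \ {a}` would be a smaller model of the reduct
  have hmod : isModel (I \ {a}) (reduct Q I) := by
    refine isModel_reduct_iff.2 fun r hr hn hp => ⟨?_, fun he => (hunsupported r hr he).ne_empty hn⟩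
    exact isModel_reduct_iff.1 h.1 r hr hn (hp.trans Set.sdiff_subset)
  exact (h.2 _ hmod ha).2 rfl

lemma isAnswerSet.disjoint_of_forall_head_notMem {S : Set Atom} (h : isAnswerSet Q I)
    (hS : ∀ r ∈ Q, r.head ∉ S) : Disjoint I S := by
  refine Set.disjoint_left.2 fun a ha haS => ?_
  obtain ⟨r, hr, rfl, -⟩ := h.exists_rule_head_eq ha
  exact hS r hr haS

lemma isAnswerSet_union_facts_of_subset {T T' : Set Atom} (h : isAnswerSet (Q ∪ facts T) I)
    (hT : T ⊆ T') (hT' : T' ⊆ I) : isAnswerSet (Q ∪ facts T') I := by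
  simp only [isAnswerSet, isModel_reduct_union_iff, isModel_reduct_facts_iff] at h ⊢
  exact ⟨⟨h.1.1, hT'⟩, fun J hJ => h.2 J ⟨hJ.1, hT.trans hJ.2⟩⟩

end AnswerSet

section Choice

variable {Q : Set (Rule Atom)} {nn : Atom → Atom} {G I₀ : Set Atom}

lemma isModel_reduct_choiceRules_union_iff (hG : Disjoint G (nn '' G)) (hnn : Set.InjOn nn G)
    (hI₀ : Disjoint I₀ (nn '' G)) {J : Set Atom} :
    isModel J (reduct (choiceRules nn G) (I₀ ∪ nn '' (G \ I₀))) ↔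
      I₀ ∩ G ⊆ J ∧ nn '' (G \ I₀) ⊆ J := by
  have hx : ∀ x ∈ G, x ∈ I₀ ∪ nn '' (G \ I₀) ↔ x ∈ I₀ := fun x hxG =>
    or_iff_left fun h => Set.disjoint_left.1 hG hxG (Set.image_mono Set.sdiff_subset h)
  have hnx : ∀ x ∈ G, nn x ∈ I₀ ∪ nn '' (G \ I₀) ↔ x ∉ I₀ := fun x hxG => by
    rw [Set.mem_union, or_iff_right (Set.disjoint_right.1 hI₀ (Set.mem_image_of_mem nn hxG)),
      hnn.mem_image_iff Set.sdiff_subset hxG, Set.mem_sdiff, and_iff_right hxG]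
  rw [isModel_reduct_choiceRules_iff, Set.image_subset_iff]
  refine (forall₂_congr fun x hxG => by rw [hx x hxG, hnx x hxG, not_not]).trans ?_
  simp only [Set.subset_def, Set.mem_inter_iff, Set.mem_sdiff, Set.mem_preimage]
  grind

lemma isAnswerSet_union_choiceRules_iff (hQ : ∀ r ∈ Q, r.Avoids (nn '' G))
    (hG : Disjoint G (nn '' G)) (hnn : Set.InjOn nn G) (hI₀ : Disjoint I₀ (nn '' G)) :
    isAnswerSet (Q ∪ choiceRules nn G) (I₀ ∪ nn '' (G \ I₀)) ↔
      isAnswerSet (Q ∪ facts (I₀ ∩ G)) I₀ := by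
  set S := nn '' (G \ I₀)
  have hSG : S ⊆ nn '' G := Set.image_mono Set.sdiff_subset
  have hmod : ∀ J, isModel (J ∪ S) (reduct (Q ∪ choiceRules nn G) (I₀ ∪ S)) ↔
      isModel J (reduct (Q ∪ facts (I₀ ∩ G)) I₀) := fun J => by
    rw [isModel_reduct_union_iff, isModel_reduct_union_iff, isModel_reduct_facts_iff,
      isModel_union_reduct_union_iff fun r hr => (hQ r hr).mono hSG,
      isModel_reduct_choiceRules_union_iff hG hnn hI₀, and_iff_left Set.subset_union_right,
      Set.subset_union_iff_of_disjoint_right (hI₀.mono Set.inter_subset_left hSG)]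
  constructor
  · rintro ⟨hmodel, hmin⟩
    refine ⟨(hmod I₀).1 hmodel, fun J hJ a ha => ?_⟩
    exact (hmin _ ((hmod J).2 hJ) (Or.inl ha)).resolve_right
      (Set.disjoint_left.1 hI₀ ha <| hSG ·)
  · rintro ⟨hmodel, hmin⟩
    refine ⟨(hmod I₀).2 hmodel, fun J hJ => ?_⟩
    have hSJ : S ⊆ J := ((isModel_reduct_choiceRules_union_iff hG hnn hI₀).1
      (isModel_reduct_union_iff.1 hJ).2).2
    rw [← Set.union_eq_self_of_subset_right hSJ] at hJ ⊢
    exact Set.union_subset_union_left S (hmin J ((hmod J).1 hJ))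

lemma isAnswerSet.exists_eq_union_choiceRules {I : Set Atom} (hQ : ∀ r ∈ Q, r.Avoids (nn '' G))
    (hG : Disjoint G (nn '' G)) (hnn : Set.InjOn nn G)
    (h : isAnswerSet (Q ∪ choiceRules nn G) I) :
    ∃ I₀, Disjoint I₀ (nn '' G) ∧ I = I₀ ∪ nn '' (G \ I₀) := by
  refine ⟨I \ nn '' G, Set.disjoint_sdiff_left, ?_⟩
  have hGI : G \ (I \ nn '' G) = G \ I := by
    ext x
    simp only [Set.mem_sdiff, not_and, not_not]
    exact and_congr_right fun hxG => imp_iff_not (Set.disjoint_left.1 hG hxG)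
  suffices I ∩ nn '' G = nn '' (G \ I) by rw [hGI, ← this, Set.sdiff_union_inter]
  ext a
  constructor
  · rintro ⟨haI, x, hxG, rfl⟩
    obtain ⟨r, hr | ⟨y, hyG, rfl⟩ | ⟨y, hyG, rfl⟩, hhead, hn⟩ := h.exists_rule_head_eq haI
    · exact absurd ⟨x, hxG, hhead.symm⟩ (hQ r hr).1
    · exact absurd ⟨x, hxG, hhead.symm⟩ (Set.disjoint_left.1 hG hyG)
    · obtain rfl := hnn hyG hxG hhead
      exact ⟨y, ⟨hyG, Set.singleton_inter_eq_empty.1 hn⟩, rfl⟩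
  · rintro ⟨x, ⟨hxG, hxI⟩, rfl⟩
    have hchoice := isModel_reduct_choiceRules_iff.1 (isModel_reduct_union_iff.1 h.1).2
    exact ⟨(hchoice x hxG).2 hxI, x, hxG, rfl⟩

theorem exists_isAnswerSet_union_choiceRules_iff (hQ : ∀ r ∈ Q, r.Avoids (nn '' G))
    (hG : Disjoint G (nn '' G)) (hnn : Set.InjOn nn G) :
    (∃ I, isAnswerSet (Q ∪ choiceRules nn G) I) ↔
      ∃ T ⊆ G, ∃ I, isAnswerSet (Q ∪ facts T) I := by
  constructor
  · rintro ⟨I, hI⟩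
    obtain ⟨I₀, hI₀, rfl⟩ := hI.exists_eq_union_choiceRules hQ hG hnn
    exact ⟨I₀ ∩ G, Set.inter_subset_right, I₀,
      (isAnswerSet_union_choiceRules_iff hQ hG hnn hI₀).1 hI⟩
  · rintro ⟨T, hTG, I₀, hI₀⟩
    have hdisj : Disjoint I₀ (nn '' G) := by
      refine hI₀.disjoint_of_forall_head_notMem ?_
      rintro r (hr | ⟨x, hx, rfl⟩)
      exacts [(hQ r hr).1, Set.disjoint_left.1 hG (hTG hx)]
    have hTI : T ⊆ I₀ := isModel_reduct_facts_iff.1 (isModel_reduct_union_iff.1 hI₀.1).2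
    exact ⟨_, (isAnswerSet_union_choiceRules_iff hQ hG hnn hdisj).2
      (isAnswerSet_union_facts_of_subset hI₀ (Set.subset_inter hTI hTG) Set.inter_subset_left)⟩

end Choice

end AnswerSetProgramming

theorem stmt13_general {Atom : Type} (P : Set (Rule Atom)) (D Rp Rm : Set Atom)
    (nn : Atom → Atom)
    (hRp : Rp ⊆ D) (hdisj : Rp ∩ Rm = ∅)
    (hinj : Function.Injective nn)
    (hfresh : ∀ x, nn x ∉ D ∧ ∀ r ∈ P, r.head ≠ nn x ∧ nn x ∉ r.pbody ∧ nn x ∉ r.nbody) :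
    (∀ F, F ⊆ D → Rp ⊆ F → Rm ∩ F = ∅ → ¬ ∃ I, isAnswerSet (P ∪ facts F) I) ↔
      ¬ ∃ I, isAnswerSet
        (P ∪ facts Rp
           ∪ {r | ∃ x ∈ D \ (Rp ∪ Rm), r = Rule.mk x ∅ {nn x}}
           ∪ {r | ∃ x ∈ D \ (Rp ∪ Rm), r = Rule.mk (nn x) ∅ {x}}) I := by
  set G := D \ (Rp ∪ Rm)
  have hnnD : Disjoint D (nn '' G) := Set.disjoint_right.2 fun _ ⟨x, _, hx⟩ => hx ▸ (hfresh x).1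
  have hQ : ∀ r ∈ P ∪ facts Rp, r.Avoids (nn '' G) := by
    rintro r (hr | ⟨a, ha, rfl⟩)
    · have hr' := fun x => (hfresh x).2 r hr
      refine ⟨fun ⟨x, _, hx⟩ => (hr' x).1 hx.symm, Set.disjoint_right.2 ?_,
        Set.disjoint_right.2 ?_⟩ <;> rintro _ ⟨x, -, rfl⟩
      exacts [(hr' x).2.1, (hr' x).2.2]
    · exact ⟨Set.disjoint_left.1 hnnD (hRp ha), Set.empty_disjoint _, Set.empty_disjoint _⟩
  rw [Set.union_assoc (P ∪ facts Rp)]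
  refine Iff.trans ?_ (not_congr (exists_isAnswerSet_union_choiceRules_iff hQ
    (hnnD.mono_left Set.sdiff_subset) hinj.injOn)).symm
  simp only [Set.union_assoc, ← facts_union]
  rw [← Set.exists_between_iff_exists_union (p := fun F => ∃ I, isAnswerSet (P ∪ facts F) I)
    hRp hdisj]
  simp only [not_exists, not_and]

theorem stmt13 {Atom : Type} (P : Set (Rule Atom)) (D Rp Rm : Set Atom)
    (nn : Atom → Atom)
    (hHD : ∀ r ∈ P, r.head ∉ D)
    (hRp : Rp ⊆ D) (hRm : Rm ⊆ D) (hdisj : Rp ∩ Rm = ∅)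
    (hinj : Function.Injective nn)
    (hfresh : ∀ x, nn x ∉ D ∧ ∀ r ∈ P, r.head ≠ nn x ∧ nn x ∉ r.pbody ∧ nn x ∉ r.nbody) :
    (∀ F, F ⊆ D → Rp ⊆ F → Rm ∩ F = ∅ → ¬ ∃ I, isAnswerSet (P ∪ facts F) I) ↔
      ¬ ∃ I, isAnswerSet
        (P ∪ facts Rp
           ∪ {r | ∃ x ∈ D \ (Rp ∪ Rm), r = Rule.mk x ∅ {nn x}}
           ∪ {r | ∃ x ∈ D \ (Rp ∪ Rm), r = Rule.mk (nn x) ∅ {x}}) I :=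
  stmt13_general P D Rp Rm nn hRp hdisj hinj hfresh
end

section
/- Splitting by the well-known splitting property (list of two components): let P₁, P₂ be normal propositional programs such that no atom occurring in P₁ appears in the head of any rule of P₂ (P₂ does not redefine atoms of P₁). Then I is an answer set of P₁ ∪ P₂ if and only if there is an answer set J of P₁ such that I is an answer set of P₂ ∪ facts(J) with I ∩ Atoms(P₁) = J, where Atoms(P₁) is the set of atoms occurring in P₁. -/
def ruleAtoms {Atom : Type} (r : Rule Atom) : Set Atom :=
  {r.head} ∪ r.pbody ∪ r.nbody

def progAtoms {Atom : Type} (P : Set (Rule Atom)) : Set Atom :=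
  ⋃ r ∈ P, ruleAtoms r


/-! The Gelfond–Lifschitz reduct of `P₁ ∪ P₂` by `I` splits into a positive program `Q₁` whose atoms
lie in `A = Atoms(P₁)` and a positive program `Q₂` whose heads avoid `A`. Models of positive
programs are closed under intersection, and whether `K` models `Q₁` depends only on `K ∩ A`.
Hence a model `K` of one part can be cut down to `I ∩ K` or `I ∩ (K ∪ Aᶜ)`, a model of the whole
reduct; minimality of `I` for `Q₁ ∪ Q₂` is thus equivalent to minimality of `I ∩ A` for `Q₁`
together with minimality of `I` for `Q₂` plus the facts `I ∩ A`. -/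

section Splitting

variable {Atom : Type}

def IsPositive (Q : Set (Rule Atom)) : Prop :=
  ∀ r ∈ Q, r.nbody = ∅

def IsLeastModel (Q : Set (Rule Atom)) (I : Set Atom) : Prop :=
  isModel I Q ∧ ∀ K, isModel K Q → I ⊆ K

theorem isAnswerSet_iff_isLeastModel {P : Set (Rule Atom)} {I : Set Atom} :
    isAnswerSet P I ↔ IsLeastModel (reduct P I) I :=
  Iff.rfl

theorem ruleAtoms_subset_progAtoms {P : Set (Rule Atom)} {r : Rule Atom} (hr : r ∈ P) :
    ruleAtoms r ⊆ progAtoms P :=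
  Set.subset_biUnion_of_mem (u := ruleAtoms) hr

theorem head_mem_progAtoms {P : Set (Rule Atom)} {r : Rule Atom} (hr : r ∈ P) :
    r.head ∈ progAtoms P :=
  ruleAtoms_subset_progAtoms hr (Or.inl (Or.inl rfl))

theorem pbody_subset_progAtoms {P : Set (Rule Atom)} {r : Rule Atom} (hr : r ∈ P) :
    r.pbody ⊆ progAtoms P :=
  fun _ ha => ruleAtoms_subset_progAtoms hr (Or.inl (Or.inr ha))

theorem nbody_subset_progAtoms {P : Set (Rule Atom)} {r : Rule Atom} (hr : r ∈ P) :
    r.nbody ⊆ progAtoms P :=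
  fun _ ha => ruleAtoms_subset_progAtoms hr (Or.inr ha)

theorem isModel_union {I : Set Atom} {P Q : Set (Rule Atom)} :
    isModel I (P ∪ Q) ↔ isModel I P ∧ isModel I Q :=
  forall₂_or_left

theorem isModel_of_forall_head_mem {K : Set Atom} {Q : Set (Rule Atom)}
    (hK : ∀ r ∈ Q, r.head ∈ K) : isModel K Q :=
  fun r hr _ => hK r hr

theorem isModel_facts_iff {K F : Set Atom} : isModel K (facts F) ↔ F ⊆ K := by
  constructor
  · intro hK a ha
    exact hK _ ⟨a, ha, rfl⟩ ⟨Set.empty_subset K, Set.empty_inter K⟩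
  · rintro hF r ⟨a, ha, rfl⟩ -
    exact hF ha

theorem IsPositive.union {P Q : Set (Rule Atom)} (hP : IsPositive P) (hQ : IsPositive Q) :
    IsPositive (P ∪ Q) :=
  forall₂_or_left.2 ⟨hP, hQ⟩

theorem isPositive_reduct (P : Set (Rule Atom)) (I : Set Atom) : IsPositive (reduct P I) := by
  rintro _ ⟨r, -, -, rfl⟩
  rfl

theorem IsPositive.isModel_inter {Q : Set (Rule Atom)} (hQ : IsPositive Q) {K L : Set Atom}
    (hK : isModel K Q) (hL : isModel L Q) : isModel (K ∩ L) Q := by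
  rintro r hr ⟨hp, -⟩
  have hn : ∀ M : Set Atom, r.nbody ∩ M = ∅ := by simp [hQ r hr]
  exact ⟨hK r hr ⟨hp.trans Set.inter_subset_left, hn K⟩,
    hL r hr ⟨hp.trans Set.inter_subset_right, hn L⟩⟩

theorem isModel_inter_iff_of_progAtoms_subset {Q : Set (Rule Atom)} {A : Set Atom}
    (hQ : progAtoms Q ⊆ A) {K : Set Atom} : isModel (K ∩ A) Q ↔ isModel K Q := by
  refine forall₂_congr fun r hr => ?_
  have hp := (pbody_subset_progAtoms hr).trans hQ
  have hn := (nbody_subset_progAtoms hr).trans hQ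
  have hh := hQ (head_mem_progAtoms hr)
  have hnK : r.nbody ∩ (K ∩ A) = r.nbody ∩ K := by
    rw [Set.inter_comm K, ← Set.inter_assoc, Set.inter_eq_left.2 hn]
  simp only [satRule, Set.subset_inter_iff, hp, and_true, hnK, Set.mem_inter_iff, hh]

theorem reduct_union (P Q : Set (Rule Atom)) (I : Set Atom) :
    reduct (P ∪ Q) I = reduct P I ∪ reduct Q I := by
  ext r'
  simp only [reduct, Set.mem_union, Set.mem_ofPred_eq, or_and_right, exists_or]

theorem reduct_facts (F I : Set Atom) : reduct (facts F) I = facts F := by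
  ext r'
  constructor
  · rintro ⟨r, ⟨a, ha, rfl⟩, -, rfl⟩
    exact ⟨a, ha, rfl⟩
  · rintro ⟨a, ha, rfl⟩
    exact ⟨_, ⟨a, ha, rfl⟩, Set.empty_inter I, rfl⟩

theorem progAtoms_reduct_subset (P : Set (Rule Atom)) (I : Set Atom) :
    progAtoms (reduct P I) ⊆ progAtoms P := by
  refine Set.iUnion₂_subset ?_
  rintro _ ⟨r, hr, -, rfl⟩
  refine Set.union_subset (Set.union_subset ?_ ?_) (Set.empty_subset _)
  · exact Set.singleton_subset_iff.2 (head_mem_progAtoms (r := r) hr)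
  · exact pbody_subset_progAtoms (r := r) hr

theorem reduct_inter_progAtoms (P : Set (Rule Atom)) (I : Set Atom) :
    reduct P (I ∩ progAtoms P) = reduct P I := by
  have key : ∀ r ∈ P, r.nbody ∩ (I ∩ progAtoms P) = r.nbody ∩ I := fun r hr => by
    rw [Set.inter_comm I, ← Set.inter_assoc, Set.inter_eq_left.2 (nbody_subset_progAtoms hr)]
  ext r'
  exact exists_congr fun r => and_congr_right fun hr => by rw [key r hr]

theorem inter_subset_of_isLeastModel_union {Q₁ Q₂ : Set (Rule Atom)} {A I K : Set Atom}
    (hQ : IsPositive (Q₁ ∪ Q₂)) (hA : progAtoms Q₁ ⊆ A) (hhead : ∀ r ∈ Q₂, r.head ∉ A)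
    (hI : IsLeastModel (Q₁ ∪ Q₂) I) (hK : isModel K Q₁) : I ∩ A ⊆ K := by
  have hKA₁ : isModel (K ∪ Aᶜ) Q₁ := by
    rw [← isModel_inter_iff_of_progAtoms_subset hA, Set.union_inter_distrib_right,
      Set.compl_inter_self, Set.union_empty, isModel_inter_iff_of_progAtoms_subset hA]
    exact hK
  have hKA₂ : isModel (K ∪ Aᶜ) Q₂ :=
    isModel_of_forall_head_mem fun r hr => Or.inr (hhead r hr)
  have hIK := hI.2 _ (hQ.isModel_inter hI.1 (isModel_union.2 ⟨hKA₁, hKA₂⟩))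
  rintro a ⟨haI, haA⟩
  exact (hIK haI).2.resolve_right (not_not.2 haA)

theorem subset_of_isLeastModel_union {Q₁ Q₂ : Set (Rule Atom)} {A I K : Set Atom}
    (hQ₁ : IsPositive Q₁) (hQ₂ : IsPositive Q₂) (hA : progAtoms Q₁ ⊆ A)
    (hI : IsLeastModel (Q₁ ∪ Q₂) I) (hK : isModel K Q₂) (hIA : I ∩ A ⊆ K) : I ⊆ K := by
  obtain ⟨hI₁, hI₂⟩ := isModel_union.1 hI.1
  have hAK : isModel (A ∪ K) Q₁ :=
    isModel_of_forall_head_mem fun r hr => Or.inl (hA (head_mem_progAtoms hr))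
  have hIK : I ∩ K = I ∩ (A ∪ K) := by
    rw [Set.inter_union_distrib_left,
      Set.union_eq_right.2 (Set.subset_inter Set.inter_subset_left hIA)]
  have hIK₁ : isModel (I ∩ K) Q₁ := hIK ▸ hQ₁.isModel_inter hI₁ hAK
  exact fun a ha => (hI.2 _ (isModel_union.2 ⟨hIK₁, hQ₂.isModel_inter hI₂ hK⟩) ha).2

theorem isLeastModel_union_iff {Q₁ Q₂ : Set (Rule Atom)} {A : Set Atom}
    (hQ₁ : IsPositive Q₁) (hQ₂ : IsPositive Q₂) (hA : progAtoms Q₁ ⊆ A)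
    (hhead : ∀ r ∈ Q₂, r.head ∉ A) (I : Set Atom) :
    IsLeastModel (Q₁ ∪ Q₂) I ↔
      IsLeastModel Q₁ (I ∩ A) ∧ IsLeastModel (Q₂ ∪ facts (I ∩ A)) I := by
  constructor
  · intro hI
    obtain ⟨hI₁, hI₂⟩ := isModel_union.1 hI.1
    refine ⟨⟨(isModel_inter_iff_of_progAtoms_subset hA).2 hI₁, fun K hK => ?_⟩,
      ⟨isModel_union.2 ⟨hI₂, isModel_facts_iff.2 Set.inter_subset_left⟩, fun K hK => ?_⟩⟩
    · exact inter_subset_of_isLeastModel_union (hQ₁.union hQ₂) hA hhead hI hK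
    · obtain ⟨hK₂, hKf⟩ := isModel_union.1 hK
      exact subset_of_isLeastModel_union hQ₁ hQ₂ hA hI hK₂ (isModel_facts_iff.1 hKf)
  · rintro ⟨⟨hJ, hJmin⟩, ⟨hI, hImin⟩⟩
    obtain ⟨hI₂, -⟩ := isModel_union.1 hI
    refine ⟨isModel_union.2 ⟨(isModel_inter_iff_of_progAtoms_subset hA).1 hJ, hI₂⟩,
      fun K hK => hImin K ?_⟩
    obtain ⟨hK₁, hK₂⟩ := isModel_union.1 hK
    exact isModel_union.2 ⟨hK₂, isModel_facts_iff.2 (hJmin K hK₁)⟩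

end Splitting

theorem stmt14 {Atom : Type} (P1 P2 : Set (Rule Atom))
    (h : ∀ r ∈ P2, r.head ∉ progAtoms P1) :
    ∀ I, isAnswerSet (P1 ∪ P2) I ↔
      ∃ J, isAnswerSet P1 J ∧ isAnswerSet (P2 ∪ facts J) I ∧
        I ∩ progAtoms P1 = J := by
  intro I
  have hhead : ∀ r ∈ reduct P2 I, r.head ∉ progAtoms P1 := by
    rintro _ ⟨r, hr, -, rfl⟩
    exact h r hr
  have hsplit : isAnswerSet (P1 ∪ P2) I ↔ isAnswerSet P1 (I ∩ progAtoms P1) ∧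
      isAnswerSet (P2 ∪ facts (I ∩ progAtoms P1)) I := by
    simpa only [isAnswerSet_iff_isLeastModel, reduct_union, reduct_facts, reduct_inter_progAtoms]
      using isLeastModel_union_iff (isPositive_reduct P1 I) (isPositive_reduct P2 I)
        (progAtoms_reduct_subset P1 I) hhead I
  rw [hsplit]
  exact ⟨fun hI => ⟨_, hI.1, hI.2, rfl⟩, fun ⟨_, hJ, hI, hIJ⟩ => hIJ ▸ ⟨hJ, hI⟩⟩
end
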